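/- Let n ≥ 2, δ ∈ (0,1), let α_1,…,α_n be i.i.d. uniform on [δ,1], and let π(i) = α_i/(α_1+⋯+α_n). Then for every t > 0 and every ν in the probability simplex S_n: P( ‖π − ν‖_∞ ≤ t·‖π‖_∞ ) ≤ (2/(δ(1−δ)))^n · t^{n−1}. Consequently, the small ball probability ℒ_∞(t) = sup_{ν ∈ S_n} P(‖π − ν‖_∞/‖π‖_∞ ≤ t) satisfies ℒ_∞(t) ≤ (2/(δ(1−δ)))^n · t^{n−1}. -/

import Mathlib

/-!
On `[δ,1]^n` we have `‖π‖_∞ ≤ 1/S` with `S = α_1 + ⋯ + α_n`, so the event forces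
`|α_i - ν_i S| ≤ t` for every `i`. Pick `k` with `ν_k ≥ 1/n` and let `u` be `ν` with its `k`-th
entry replaced by `0`. The linear map `v ↦ v - S(v) u` has determinant `1 - ∑ u = ν_k` and sends the
event into the box with side `[δ,1]` in coordinate `k` and `[-t,t]` elsewhere, so the event has Lebesgue measure at most
`n (1-δ) (2t)^{n-1}`. The joint density is `(1-δ)^{-n}` on `[δ,1]^n`, and `n δ^n (1-δ) ≤ 1` turns the
resulting bound into `(2/(δ(1-δ)))^n t^{n-1}`. On `[δ,1]^n` also `‖π‖_∞ > 0`, so there the ratio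
event is contained in the first one.
-/

open MeasureTheory ProbabilityTheory

/-- ℓ^∞ norm of a vector. -/
noncomputable def linfty {n : ℕ} (v : Fin n → ℝ) : ℝ := ⨆ i, |v i|

/-- Canonically scaled skill parameters `π(i) = α_i / (α_1 + ⋯ + α_n)`. -/
noncomputable def piVec {n : ℕ} (β : Fin n → ℝ) : Fin n → ℝ := fun i => β i / ∑ j, β j

open Set

lemma nat_mul_pow_mul_one_sub_le_one {δ : ℝ} (h0 : 0 ≤ δ) (h1 : δ ≤ 1) (m : ℕ) :
    m * δ ^ m * (1 - δ) ≤ 1 := by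
  have hsum : (m : ℝ) * δ ^ m ≤ ∑ i ∈ Finset.range m, δ ^ i := by
    simpa using Finset.card_nsmul_le_sum (Finset.range m) (δ ^ ·) (δ ^ m)
      fun i hi => pow_le_pow_of_le_one h0 h1 (Finset.mem_range.1 hi).le
  calc (m : ℝ) * δ ^ m * (1 - δ) ≤ (∑ i ∈ Finset.range m, δ ^ i) * (1 - δ) :=
        mul_le_mul_of_nonneg_right hsum (sub_nonneg.2 h1)
    _ = 1 - δ ^ m := geom_sum_mul_neg δ m
    _ ≤ 1 := sub_le_self _ (pow_nonneg h0 m)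

lemma inv_one_sub_pow_mul_le {δ t : ℝ} {n : ℕ} (hδ : δ ∈ Ioo (0 : ℝ) 1) (ht : 0 ≤ t)
    (hn : 1 ≤ n) :
    (1 - δ)⁻¹ ^ n * (n * ((1 - δ) * (2 * t) ^ (n - 1)))
      ≤ (2 / (δ * (1 - δ))) ^ n * t ^ (n - 1) := by
  obtain ⟨hδ0, hδ1⟩ := hδ
  obtain ⟨m, rfl⟩ := Nat.exists_eq_add_of_le' hn
  have h1δ : 1 - δ ≠ 0 := (sub_pos.2 hδ1).ne'
  have hkey : ((m + 1 : ℕ) : ℝ) * (δ ^ (m + 1) * (1 - δ)) ≤ 2 := by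
    have := nat_mul_pow_mul_one_sub_le_one hδ0.le hδ1.le (m + 1)
    rw [mul_assoc] at this
    linarith
  rw [Nat.add_sub_cancel]
  calc (1 - δ)⁻¹ ^ (m + 1) * (((m + 1 : ℕ) : ℝ) * ((1 - δ) * (2 * t) ^ m))
      = ((m + 1 : ℕ) : ℝ) * (δ ^ (m + 1) * (1 - δ))
          * ((2 * t) ^ m / (δ ^ (m + 1) * (1 - δ) ^ (m + 1))) := by
        rw [inv_pow]
        field_simp
    _ ≤ 2 * ((2 * t) ^ m / (δ ^ (m + 1) * (1 - δ) ^ (m + 1))) := by gcongr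
    _ = (2 / (δ * (1 - δ))) ^ (m + 1) * t ^ m := by
        rw [div_pow, mul_pow, mul_pow]
        field_simp
        ring

lemma exists_one_le_card_mul_of_mem_stdSimplex {ι : Type*} [Fintype ι] {ν : ι → ℝ}
    (hν : ν ∈ stdSimplex ℝ ι) : ∃ k, 1 ≤ Fintype.card ι * ν k := by
  have : Nonempty ι := by
    by_contra h
    rw [not_nonempty_iff] at h
    simpa using hν.2
  obtain ⟨k, hk⟩ := Finite.exists_max ν
  refine ⟨k, ?_⟩
  calc (1 : ℝ) = ∑ i, ν i := hν.2.symm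
    _ ≤ ∑ _i, ν k := Finset.sum_le_sum fun i _ => hk i
    _ = Fintype.card ι * ν k := by simp

section Shear

variable {ι : Type*} [Fintype ι] [DecidableEq ι]

noncomputable def sumShear (u : ι → ℝ) : (ι → ℝ) →ₗ[ℝ] ι → ℝ :=
  Matrix.toLin' (1 + Matrix.replicateCol Unit (-u) * Matrix.replicateRow Unit (1 : ι → ℝ))

lemma sumShear_apply (u v : ι → ℝ) (i : ι) : sumShear u v i = v i - u i * ∑ j, v j := by
  simp [sumShear, Matrix.mulVec, dotProduct, Finset.mul_sum, sub_eq_add_neg, Matrix.mul_apply]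

lemma det_sumShear (u : ι → ℝ) : LinearMap.det (sumShear u) = 1 - ∑ i, u i := by
  rw [sumShear, LinearMap.det_toLin', Matrix.det_one_add_replicateCol_mul_replicateRow]
  simp [dotProduct, sub_eq_add_neg]

lemma volume_pi_update_Icc (k : ι) (a b t : ℝ) :
    volume (univ.pi (Function.update (fun _ => Icc (-t) t) k (Icc a b)))
      = ENNReal.ofReal (b - a) * ENNReal.ofReal (2 * t) ^ (Fintype.card ι - 1) := by
  rw [volume_pi_pi]
  simp_rw [Function.apply_update (fun _ => (volume : Measure ℝ))]
  rw [Finset.prod_update_of_mem (Finset.mem_univ k)]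
  simp [Real.volume_Icc, two_mul, Finset.card_sdiff]

end Shear

section Linfty

variable {n : ℕ}

lemma abs_le_linfty (v : Fin n → ℝ) (i : Fin n) : |v i| ≤ linfty v :=
  le_ciSup (f := fun i => |v i|) (finite_range _).bddAbove i

lemma linfty_piVec_le {v : Fin n → ℝ} (hv0 : ∀ i, 0 ≤ v i) (hv1 : ∀ i, v i ≤ 1)
    (hS : 0 < ∑ j, v j) : linfty (piVec v) ≤ (∑ j, v j)⁻¹ :=
  Real.iSup_le (fun i => by
    rw [piVec, abs_of_nonneg (div_nonneg (hv0 i) hS.le), div_eq_mul_inv]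
    exact mul_le_of_le_one_left (inv_nonneg.2 hS.le) (hv1 i)) (inv_nonneg.2 hS.le)

lemma linfty_piVec_pos {v : Fin n → ℝ} (hv : ∀ i, 0 < v i) (i : Fin n) :
    0 < linfty (piVec v) := by
  have hS : 0 < ∑ j, v j := Finset.sum_pos (fun j _ => hv j) ⟨i, Finset.mem_univ i⟩
  exact (div_pos (hv i) hS).trans_le ((le_abs_self _).trans (abs_le_linfty (piVec v) i))

def relBall (ν : Fin n → ℝ) (t : ℝ) : Set (Fin n → ℝ) :=
  {v | linfty (fun i => piVec v i - ν i) ≤ t * linfty (piVec v)}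

lemma abs_sub_mul_sum_le_of_mem_relBall {ν v : Fin n → ℝ} {t : ℝ} (ht : 0 ≤ t)
    (hv : v ∈ relBall ν t) (hv0 : ∀ i, 0 ≤ v i) (hv1 : ∀ i, v i ≤ 1) (hS : 0 < ∑ j, v j)
    (i : Fin n) : |v i - ν i * ∑ j, v j| ≤ t := by
  have hdiff : |piVec v i - ν i| ≤ t * (∑ j, v j)⁻¹ :=
    (abs_le_linfty _ i).trans
      (hv.trans (mul_le_mul_of_nonneg_left (linfty_piVec_le hv0 hv1 hS) ht))
  have hscale : v i - ν i * ∑ j, v j = (∑ j, v j) * (piVec v i - ν i) := by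
    rw [piVec]
    field_simp
  rw [hscale, abs_mul, abs_of_pos hS, ← le_div_iff₀' hS, div_eq_mul_inv]
  exact hdiff

lemma relBall_inter_box_subset_preimage_sumShear {ν : Fin n → ℝ} {δ t : ℝ} (hδ : 0 < δ)
    (ht : 0 ≤ t) (k : Fin n) :
    relBall ν t ∩ univ.pi (fun _ => Icc δ 1) ⊆
      sumShear (Function.update ν k 0) ⁻¹'
        univ.pi (Function.update (fun _ => Icc (-t) t) k (Icc δ 1)) := by
  rintro v ⟨hvball, hvbox⟩
  have hv : ∀ i, v i ∈ Icc δ 1 := fun i => hvbox i (mem_univ i)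
  have hv0 : ∀ i, 0 ≤ v i := fun i => hδ.le.trans (hv i).1
  have hS : 0 < ∑ j, v j :=
    Finset.sum_pos (fun j _ => hδ.trans_le (hv j).1) ⟨k, Finset.mem_univ k⟩
  have hclose := abs_sub_mul_sum_le_of_mem_relBall ht hvball hv0 (fun i => (hv i).2) hS
  refine fun i _ => ?_
  rw [sumShear_apply]
  rcases eq_or_ne i k with rfl | hik
  · simpa using hv i
  · simpa [hik] using abs_le.1 (hclose i)

lemma volume_relBall_inter_box_le {ν : Fin n → ℝ} (hν : ν ∈ stdSimplex ℝ (Fin n))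
    {δ t : ℝ} (hδ : δ ∈ Ioo (0 : ℝ) 1) (ht : 0 ≤ t) :
    volume (relBall ν t ∩ univ.pi (fun _ => Icc δ 1))
      ≤ ENNReal.ofReal (n * ((1 - δ) * (2 * t) ^ (n - 1))) := by
  obtain ⟨k, hk⟩ := exists_one_le_card_mul_of_mem_stdSimplex hν
  rw [Fintype.card_fin] at hk
  have hνk : 0 < ν k := pos_of_mul_pos_right (one_pos.trans_le hk) (Nat.cast_nonneg n)
  have hdet : LinearMap.det (sumShear (Function.update ν k 0)) = ν k := by
    rw [det_sumShear, Finset.sum_update_of_mem (Finset.mem_univ k),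
      Finset.sdiff_singleton_eq_erase, ← hν.2, ← Finset.add_sum_erase _ _ (Finset.mem_univ k)]
    ring
  calc volume (relBall ν t ∩ univ.pi (fun _ => Icc δ 1))
      ≤ volume (sumShear (Function.update ν k 0) ⁻¹'
          univ.pi (Function.update (fun _ => Icc (-t) t) k (Icc δ 1))) :=
        measure_mono (relBall_inter_box_subset_preimage_sumShear hδ.1 ht k)
    _ = ENNReal.ofReal ((ν k)⁻¹ * ((1 - δ) * (2 * t) ^ (n - 1))) := by
        rw [Measure.addHaar_preimage_linearMap _ (hdet ▸ hνk.ne'), hdet, volume_pi_update_Icc,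
          Fintype.card_fin, abs_of_pos (inv_pos.2 hνk), ENNReal.ofReal_mul (inv_pos.2 hνk).le,
          ENNReal.ofReal_mul (sub_pos.2 hδ.2).le, ENNReal.ofReal_pow (by positivity)]
    _ ≤ ENNReal.ofReal (n * ((1 - δ) * (2 * t) ^ (n - 1))) := by
        have h1δ : 0 ≤ 1 - δ := (sub_pos.2 hδ.2).le
        gcongr
        exact (inv_le_iff_one_le_mul₀ hνk).2 hk

lemma ratio_inter_box_subset_relBall {ν : Fin n → ℝ} (hν : ν ∈ stdSimplex ℝ (Fin n))
    {δ t : ℝ} (hδ : 0 < δ) :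
    {v | linfty (fun i => piVec v i - ν i) / linfty (piVec v) ≤ t} ∩ univ.pi (fun _ => Icc δ 1)
      ⊆ relBall ν t := by
  rintro v ⟨hv, hvbox⟩
  obtain ⟨k, -⟩ := exists_one_le_card_mul_of_mem_stdSimplex hν
  exact (div_le_iff₀ (linfty_piVec_pos (fun i => hδ.trans_le (hvbox i (mem_univ i)).1) k)).1 hv

end Linfty

lemma map_fun_eq_smul_volume_restrict_pi {ι Ω : Type*} [Fintype ι] [MeasurableSpace Ω]
    {P : Measure Ω} {X : ι → Ω → ℝ} (hX : ∀ i, Measurable (X i)) (hindep : iIndepFun X P)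
    {c : ENNReal} (hc : c ≠ ⊤) {s : Set ℝ} (hlaw : ∀ i, P.map (X i) = c • volume.restrict s) :
    P.map (fun ω i => X i ω) = c ^ Fintype.card ι • volume.restrict (univ.pi fun _ => s) := by
  lift c to NNReal using hc
  rw [hindep.map_fun_eq_pi_map fun i => (hX i).aemeasurable]
  simp only [hlaw, Measure.coe_nnreal_smul]
  refine Measure.pi_eq fun t ht => ?_
  simp only [Measure.smul_apply, Measure.nnreal_smul_coe_apply, smul_eq_mul]
  rw [Measure.restrict_apply (MeasurableSet.univ_pi ht), ← Set.pi_inter_distrib, volume_pi_pi,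
    Finset.prod_mul_distrib, Finset.prod_const, Finset.card_univ]
  simp only [Measure.restrict_apply (ht _)]

lemma measure_preimage_le_of_inter_box_subset_relBall {n : ℕ} {Ω : Type*} [MeasurableSpace Ω]
    {P : Measure Ω} {X : Fin n → Ω → ℝ} (hX : ∀ i, Measurable (X i)) {δ t : ℝ}
    (hδ : δ ∈ Ioo (0 : ℝ) 1) (ht : 0 ≤ t)
    (hlaw : P.map (fun ω i => X i ω)
      = ENNReal.ofReal (1 - δ)⁻¹ ^ n • volume.restrict (univ.pi fun _ => Icc δ 1))
    {ν : Fin n → ℝ} (hν : ν ∈ stdSimplex ℝ (Fin n)) {A : Set (Fin n → ℝ)}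
    (hA : A ∩ univ.pi (fun _ => Icc δ 1) ⊆ relBall ν t) :
    P ((fun ω i => X i ω) ⁻¹' A) ≤ ENNReal.ofReal ((2 / (δ * (1 - δ))) ^ n * t ^ (n - 1)) := by
  obtain ⟨k, -⟩ := exists_one_le_card_mul_of_mem_stdSimplex hν
  have h1δ : 0 ≤ 1 - δ := (sub_pos.2 hδ.2).le
  calc P ((fun ω i => X i ω) ⁻¹' A)
      ≤ P.map (fun ω i => X i ω) A :=
        Measure.le_map_apply (measurable_pi_lambda _ hX).aemeasurable A
    _ = ENNReal.ofReal (1 - δ)⁻¹ ^ n * volume (A ∩ univ.pi (fun _ => Icc δ 1)) := by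
        rw [hlaw, Measure.smul_apply, smul_eq_mul,
          Measure.restrict_apply' (MeasurableSet.univ_pi fun _ => measurableSet_Icc)]
    _ ≤ ENNReal.ofReal (1 - δ)⁻¹ ^ n * ENNReal.ofReal (n * ((1 - δ) * (2 * t) ^ (n - 1))) := by
        gcongr
        exact (measure_mono (subset_inter hA inter_subset_right)).trans
          (volume_relBall_inter_box_le hν hδ ht)
    _ ≤ ENNReal.ofReal ((2 / (δ * (1 - δ))) ^ n * t ^ (n - 1)) := by
        rw [← ENNReal.ofReal_pow (inv_nonneg.2 h1δ), ← ENNReal.ofReal_mul (by positivity)]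
        exact ENNReal.ofReal_le_ofReal (inv_one_sub_pow_mul_le hδ ht (Fin.pos k))

theorem small_ball_linfty_bound_general (n : ℕ) (δ : ℝ) (hδ : δ ∈ Set.Ioo (0 : ℝ) 1)
    {Ω : Type} [MeasurableSpace Ω] (P : Measure Ω)
    (α : Fin n → Ω → ℝ) (hmeas : ∀ i, Measurable (α i))
    (hindep : iIndepFun (m := fun _ => Real.measurableSpace) α P)
    (hunif : ∀ i, Measure.map (α i) P =
      ENNReal.ofReal ((1 - δ)⁻¹) • volume.restrict (Set.Icc δ 1)) :
    (∀ t > (0 : ℝ), ∀ ν ∈ stdSimplex ℝ (Fin n),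
      P {ω | linfty (fun i => piVec (fun j => α j ω) i - ν i)
              ≤ t * linfty (piVec fun j => α j ω)}
        ≤ ENNReal.ofReal ((2 / (δ * (1 - δ))) ^ n * t ^ (n - 1))) ∧
    (∀ t > (0 : ℝ),
      (⨆ ν ∈ stdSimplex ℝ (Fin n),
          P {ω | linfty (fun i => piVec (fun j => α j ω) i - ν i)
                  / linfty (piVec fun j => α j ω) ≤ t})
        ≤ ENNReal.ofReal ((2 / (δ * (1 - δ))) ^ n * t ^ (n - 1))) := by
  have hlaw := map_fun_eq_smul_volume_restrict_pi hmeas hindep ENNReal.ofReal_ne_top hunif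
  rw [Fintype.card_fin] at hlaw
  exact ⟨fun t ht ν hν =>
      measure_preimage_le_of_inter_box_subset_relBall hmeas hδ ht.le hlaw hν inter_subset_left,
    fun t ht => iSup₂_le fun ν hν => measure_preimage_le_of_inter_box_subset_relBall hmeas hδ
      ht.le hlaw hν (ratio_inter_box_subset_relBall hν hδ.1)⟩

/-- **Upper bound on the relative ℓ^∞ small ball probability**: if `α_1,…,α_n` are i.i.d.
uniform on `[δ,1]` and `π(i) = α_i/(α_1+⋯+α_n)`, then for every `t > 0` and every `ν` in the
probability simplex, `P(‖π − ν‖_∞ ≤ t·‖π‖_∞) ≤ (2/(δ(1−δ)))^n · t^{n−1}`; consequently the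
small ball probability `ℒ_∞(t)` obeys the same bound. -/
theorem small_ball_linfty_bound (n : ℕ) (hn : 2 ≤ n) (δ : ℝ) (hδ : δ ∈ Set.Ioo (0 : ℝ) 1)
    {Ω : Type} [MeasurableSpace Ω] (P : Measure Ω) [IsProbabilityMeasure P]
    (α : Fin n → Ω → ℝ) (hmeas : ∀ i, Measurable (α i))
    (hindep : iIndepFun (m := fun _ => Real.measurableSpace) α P)
    (hunif : ∀ i, Measure.map (α i) P =
      ENNReal.ofReal ((1 - δ)⁻¹) • volume.restrict (Set.Icc δ 1)) :
    (∀ t > (0 : ℝ), ∀ ν ∈ stdSimplex ℝ (Fin n),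
      P {ω | linfty (fun i => piVec (fun j => α j ω) i - ν i)
              ≤ t * linfty (piVec fun j => α j ω)}
        ≤ ENNReal.ofReal ((2 / (δ * (1 - δ))) ^ n * t ^ (n - 1))) ∧
    (∀ t > (0 : ℝ),
      (⨆ ν ∈ stdSimplex ℝ (Fin n),
          P {ω | linfty (fun i => piVec (fun j => α j ω) i - ν i)
                  / linfty (piVec fun j => α j ω) ≤ t})
        ≤ ENNReal.ofReal ((2 / (δ * (1 - δ))) ^ n * t ^ (n - 1))) :=
  small_ball_linfty_bound_general n δ hδ P α hmeas hindep hunif
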